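/- arXiv:2509.01745 — 3 statements merged into one kernel-verified Lean document; each statement's English description precedes it below -/
import Mathlib

section
/- Let $\Gamma$ be a compact metric space with Borel $\sigma$-algebra, $P$ a Feller transition kernel. For a probability measure $\nu$ on $\Gamma$, define the Donsker-Varadhan functional $I(\nu) = -\inf_{f \in \mathcal{U}} \int_\Gamma \log\bigl(\frac{\int_\Gamma f(y)P(x,dy)}{f(x)}\bigr)\nu(dx)$ where $\mathcal{U}$ is the set of positive continuous functions on $\Gamma$. If $\nu$ is an invariant measure of $P$ (i.e., $\int P(x,A)\,\nu(dx) = \nu(A)$ for all Borel $A$), then $I(\nu) = 0$. -/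
/-!
For positive continuous `f`, write `log (P f / f) = log (P f) - log f`. Jensen's inequality for the
concave `log` under each probability measure `P x` gives `log (P f) ≥ P (log f)`, and invariance
of `ν` gives `∫ P (log f) dν = ∫ log f dν`; hence every term of the infimum defining `I(ν)` is
nonnegative, while `f ≡ 1` gives `0`. On a compact space `f` takes values in some `[a, b]` with
`a > 0`, so all functions involved are bounded and measurable, hence integrable.
-/

open MeasureTheory ProbabilityTheory

/-- The Donsker-Varadhan action functional
`I(ν) = - inf { ∫ log (P f (x) / f(x)) ν(dx) : f positive continuous }`. -/
noncomputable def dvRate {Γ : Type*} [MeasurableSpace Γ] [TopologicalSpace Γ]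
    (P : Kernel Γ Γ) (ν : Measure Γ) : ℝ :=
  - ⨅ f : {f : Γ → ℝ // Continuous f ∧ ∀ x, 0 < f x},
      ∫ x, Real.log ((∫ y, f.1 y ∂ P x) / f.1 x) ∂ν

open Set Real

namespace ProbabilityTheory.Kernel

variable {α : Type*} {mα : MeasurableSpace α} {κ : Kernel α α} {μ : Measure α}

theorem invariant_of_lintegral_eq (h : ∀ A, MeasurableSet A → ∫⁻ x, κ x A ∂μ = μ A) :
    κ.Invariant μ :=
  Measure.ext fun A hA => by rw [Measure.bind_apply hA κ.aemeasurable]; exact h A hA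

theorem Invariant.integral_integral {E : Type*} [NormedAddCommGroup E] [NormedSpace ℝ E]
    (hκ : κ.Invariant μ) {f : α → E} (hf : Integrable f μ) :
    ∫ x, ∫ y, f y ∂κ x ∂μ = ∫ x, f x ∂μ := by
  have hf' : Integrable f ((κ ∘ₖ Kernel.const Unit μ) ()) := by
    rwa [← Measure.comp_eq_comp_const_apply, hκ.def]
  have h := Kernel.integral_comp hf'
  rw [← Measure.comp_eq_comp_const_apply, hκ.def, Kernel.const_apply] at h
  exact h.symm

end ProbabilityTheory.Kernel

section

variable {α : Type*} {mα : MeasurableSpace α} {μ : Measure α} {f : α → ℝ} {a b : ℝ}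

theorem Real.log_mem_Icc_log {x : ℝ} (ha : 0 < a) (hx : x ∈ Icc a b) :
    log x ∈ Icc (log a) (log b) :=
  ⟨log_le_log ha hx.1, log_le_log (ha.trans_le hx.1) hx.2⟩

theorem integral_mem_Icc [IsProbabilityMeasure μ] (hfm : AEMeasurable f μ)
    (hf : ∀ᵐ x ∂μ, f x ∈ Icc a b) : ∫ x, f x ∂μ ∈ Icc a b :=
  (convex_Icc a b).integral_mem isClosed_Icc hf (.of_mem_Icc a b hfm hf)

theorem integral_log_le_log_integral [IsProbabilityMeasure μ] (ha : 0 < a)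
    (hfm : AEMeasurable f μ) (hf : ∀ᵐ x ∂μ, f x ∈ Icc a b) :
    ∫ x, log (f x) ∂μ ≤ log (∫ x, f x ∂μ) := by
  have hpos : ∀ t ∈ Icc a b, 0 < t := fun t ht => ha.trans_le ht.1
  have hconc : ConcaveOn ℝ (Icc a b) log :=
    strictConcaveOn_log_Ioi.concaveOn.subset hpos (convex_Icc a b)
  have hlog_int : Integrable (fun x => log (f x)) μ :=
    .of_mem_Icc (log a) (log b) (measurable_log.comp_aemeasurable hfm)
      (hf.mono fun x hx => log_mem_Icc_log ha hx)
  exact hconc.le_map_integral (continuousOn_log.mono fun t ht => (hpos t ht).ne') isClosed_Icc hf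
    (.of_mem_Icc a b hfm hf) hlog_int

end

theorem Continuous.exists_pos_forall_mem_Icc {X : Type*} [TopologicalSpace X] [CompactSpace X]
    [Nonempty X] {f : X → ℝ} (hf : Continuous f) (hpos : ∀ x, 0 < f x) :
    ∃ a b, 0 < a ∧ ∀ x, f x ∈ Icc a b := by
  obtain ⟨x₀, -, hmin⟩ := isCompact_univ.exists_isMinOn univ_nonempty hf.continuousOn
  obtain ⟨x₁, -, hmax⟩ := isCompact_univ.exists_isMaxOn univ_nonempty hf.continuousOn
  exact ⟨f x₀, f x₁, hpos x₀, fun x => ⟨hmin (mem_univ x), hmax (mem_univ x)⟩⟩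

namespace ProbabilityTheory.Kernel.Invariant

theorem integral_log_integral_div_nonneg {Γ : Type*} [TopologicalSpace Γ] [CompactSpace Γ]
    [MeasurableSpace Γ] [OpensMeasurableSpace Γ] {P : Kernel Γ Γ} [IsMarkovKernel P]
    {ν : Measure Γ} [IsProbabilityMeasure ν] (hP : P.Invariant ν) {f : Γ → ℝ}
    (hf : Continuous f) (hpos : ∀ x, 0 < f x) :
    0 ≤ ∫ x, log ((∫ y, f y ∂P x) / f x) ∂ν := by
  have := nonempty_of_isProbabilityMeasure ν
  obtain ⟨a, b, ha, hab⟩ := hf.exists_pos_forall_mem_Icc hpos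
  have hfm : Measurable f := hf.measurable
  have hlogfm : Measurable fun y => log (f y) := measurable_log.comp hfm
  have hPf : ∀ x, ∫ y, f y ∂P x ∈ Icc a b := fun x =>
    integral_mem_Icc hfm.aemeasurable (ae_of_all _ hab)
  have hlogf : Integrable (fun x => log (f x)) ν :=
    .of_mem_Icc (log a) (log b) hlogfm.aemeasurable
      (ae_of_all _ fun x => log_mem_Icc_log ha (hab x))
  have hlogPf : Integrable (fun x => log (∫ y, f y ∂P x)) ν :=
    .of_mem_Icc (log a) (log b)
      (measurable_log.comp hfm.stronglyMeasurable.integral_kernel.measurable).aemeasurable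
      (ae_of_all _ fun x => log_mem_Icc_log ha (hPf x))
  have hPlogf : Integrable (fun x => ∫ y, log (f y) ∂P x) ν :=
    .of_mem_Icc (log a) (log b) hlogfm.stronglyMeasurable.integral_kernel.measurable.aemeasurable
      (ae_of_all _ fun x => integral_mem_Icc hlogfm.aemeasurable
        (ae_of_all _ fun y => log_mem_Icc_log ha (hab y)))
  have hjensen : ∀ x, ∫ y, log (f y) ∂P x ≤ log (∫ y, f y ∂P x) := fun x =>
    integral_log_le_log_integral ha hfm.aemeasurable (ae_of_all _ hab)
  calc 0 = ∫ x, ∫ y, log (f y) ∂P x ∂ν - ∫ x, log (f x) ∂ν := by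
        rw [hP.integral_integral hlogf, sub_self]
    _ ≤ ∫ x, log (∫ y, f y ∂P x) ∂ν - ∫ x, log (f x) ∂ν :=
        sub_le_sub_right (integral_mono hPlogf hlogPf hjensen) _
    _ = ∫ x, log ((∫ y, f y ∂P x) / f x) ∂ν := by
        rw [← integral_sub hlogPf hlogf]
        congr with x
        rw [log_div (ha.trans_le (hPf x).1).ne' (hpos x).ne']

end ProbabilityTheory.Kernel.Invariant

theorem stmt_12_general {Γ : Type*} [MetricSpace Γ] [CompactSpace Γ]
    [MeasurableSpace Γ] [BorelSpace Γ]
    (P : Kernel Γ Γ) [IsMarkovKernel P]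
    (ν : Measure Γ) [IsProbabilityMeasure ν]
    (hinv : ∀ A : Set Γ, MeasurableSet A → ∫⁻ x, P x A ∂ν = ν A) :
    dvRate P ν = 0 := by
  have hP : P.Invariant ν := Kernel.invariant_of_lintegral_eq hinv
  let one : {f : Γ → ℝ // Continuous f ∧ ∀ x, 0 < f x} := ⟨1, continuous_const, fun _ => one_pos⟩
  have hone : ∫ x, log ((∫ y, one.1 y ∂P x) / one.1 x) ∂ν = 0 := by simp [one]
  have hnonneg (f : {f : Γ → ℝ // Continuous f ∧ ∀ x, 0 < f x}) :
      0 ≤ ∫ x, log ((∫ y, f.1 y ∂P x) / f.1 x) ∂ν :=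
    hP.integral_log_integral_div_nonneg f.2.1 f.2.2
  have : Nonempty {f : Γ → ℝ // Continuous f ∧ ∀ x, 0 < f x} := ⟨one⟩
  rw [dvRate, neg_eq_zero]
  exact le_antisymm ((ciInf_le ⟨0, forall_mem_range.2 hnonneg⟩ one).trans_eq hone)
    (le_ciInf hnonneg)

/-- for a Feller Markov kernel `P` on a compact metric space, the
Donsker-Varadhan functional `I` vanishes at every invariant probability
measure `ν` of `P`. -/
theorem stmt_12 {Γ : Type*} [MetricSpace Γ] [CompactSpace Γ]
    [MeasurableSpace Γ] [BorelSpace Γ]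
    (P : Kernel Γ Γ) [IsMarkovKernel P]
    (hFeller : ∀ f : Γ → ℝ, Continuous f → Continuous (fun x => ∫ y, f y ∂ P x))
    (ν : Measure Γ) [IsProbabilityMeasure ν]
    (hinv : ∀ A : Set Γ, MeasurableSet A → ∫⁻ x, P x A ∂ν = ν A) :
    dvRate P ν = 0 :=
  stmt_12_general P ν hinv
end

section
/- Let $\Gamma = S^{\mathbb{Z}^d}$ with $S$ finite, let $P$ be a transition kernel satisfying PCA assumptions (A1)-(A4) and space-shift invariance (A5): $P(x,A) = P(\theta_m x, \theta_m A)$ for all shifts $\theta_m$, $m\in\mathbb{Z}^d$. Suppose $\nu$ is a space-shift invariant probability measure on $\Gamma$ (i.e., $\nu(A)=\nu(\theta_m A)$ for all $m$, $A$) and suppose the conclusion of Lemma 2.1 holds for $\nu$: with $\Phi_n = \{z\in\mathbb{Z}^d : \sum_i|z_i|\le n\}$ and $\nu^P(A)=\int P(x,A)\,d\nu$, one has $\lim_{n\to\infty}\sup_{A\in\mathcal{B}_{\Phi_n^*}}|\nu^P(A)-\nu(A)|=0$, where $\mathcal{B}_{\Phi_n^*}$ is generated by coordinates outside $\Phi_n$.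 Then $\nu^P = \nu$, i.e., $\nu$ is time-invariant for $P$. -/
open MeasureTheory ProbabilityTheory Filter
open scoped Classical

/-- The σ-algebra on the configuration space `W → S` generated by the
coordinates in `Ψ ⊆ W`. -/
def coordSigma {S W : Type*} [MeasurableSpace S] (Ψ : Set W) :
    MeasurableSpace (W → S) :=
  ⨆ z ∈ Ψ, MeasurableSpace.comap (fun x => x z) inferInstance

/-!
An event depending on the coordinates in a finite set `Ψ` is moved by the shift `θ_m` to an
event depending on the coordinates in `Ψ - m`, and for `m` large `Ψ - m` lies outside the
`ℓ¹`-ball `Φ_n`. If `ν` and `ν^P` are both shift invariant, they give the same mass to a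
cylinder and to its shifts, so the difference of their masses on a cylinder is bounded by the
supremum in Lemma 2.1 for every `n`, hence vanishes; measures agreeing on cylinders are equal.
The shift invariance of `ν^P` is (A5) integrated against the shift invariant `ν`.
-/

section coordSigma

variable {S W : Type*} [MeasurableSpace S]

lemma measurable_comp_right_coordSigma {Ψ Ψ' : Set W} {f : W → W} (hf : Set.MapsTo f Ψ Ψ') :
    Measurable[coordSigma Ψ', coordSigma Ψ] (fun (x : W → S) => x ∘ f) := by
  rw [measurable_iff_comap_le]
  simp only [coordSigma, MeasurableSpace.comap_iSup, MeasurableSpace.comap_comp]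
  exact iSup₂_le fun z hz => le_iSup₂_of_le (f := fun w (_ : w ∈ Ψ') =>
    MeasurableSpace.comap (fun x : W → S => x w) inferInstance) (f z) (hf hz) le_rfl

lemma measurableSet_coordSigma_cylinder (s : Finset W) {B : Set (∀ _ : s, S)}
    (hB : MeasurableSet B) : MeasurableSet[coordSigma (s : Set W)] (cylinder s B) := by
  have hrestrict : Measurable[coordSigma (s : Set W)] (s.restrict (π := fun _ => S)) := by
    rw [measurable_iff_comap_le, MeasurableSpace.pi, MeasurableSpace.comap_iSup]
    refine iSup_le fun i => ?_
    rw [MeasurableSpace.comap_comp]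
    exact le_iSup₂ (f := fun w (_ : w ∈ (s : Set W)) =>
      MeasurableSpace.comap (fun x : W → S => x w) inferInstance) (i : W) i.2
  exact hrestrict hB

end coordSigma

section shift

variable (S : Type*) [MeasurableSpace S] {W : Type*} [AddGroup W]

def configShift (m : W) : (W → S) ≃ᵐ (W → S) :=
  MeasurableEquiv.arrowCongr' (Equiv.addRight m).symm (.refl S)

variable {S}

lemma coe_configShift_symm (m : W) : ⇑(configShift S m).symm = fun x => x ∘ (· - m) :=
  funext fun x => funext fun z => congrArg x (sub_eq_add_neg z m).symm

lemma measurableSet_coordSigma_image_configShift_cylinder {Ψ : Set W} {s : Finset W}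
    {B : Set (∀ _ : s, S)} (hB : MeasurableSet B) {m : W} (hm : ∀ z ∈ s, z - m ∈ Ψ) :
    MeasurableSet[coordSigma Ψ] (configShift S m '' cylinder s B) := by
  rw [MeasurableEquiv.image_eq_preimage_symm, coe_configShift_symm]
  exact measurable_comp_right_coordSigma (f := (· - m)) hm (measurableSet_coordSigma_cylinder s hB)

end shift

lemma MeasurableEquiv.measurePreserving_of_measure_image_eq {α : Type*} [MeasurableSpace α]
    {ν : Measure α} (e : α ≃ᵐ α) (hν : ∀ A, MeasurableSet A → ν (e '' A) = ν A) :
    MeasurePreserving e ν ν :=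
  ⟨e.measurable, Measure.ext fun A hA => by
    rw [e.map_apply, ← hν _ (e.measurable hA), e.image_preimage]⟩

lemma lintegral_kernel_image_eq_of_measurePreserving {α : Type*} [MeasurableSpace α]
    {ν : Measure α} {P : Kernel α α} {e : α ≃ᵐ α} (he : MeasurePreserving e ν ν)
    (hP : ∀ x A, P x A = P (e x) (e '' A)) (A : Set α) :
    ∫⁻ x, P x (e '' A) ∂ν = ∫⁻ x, P x A ∂ν := by
  rw [he.lintegral_map_equiv]
  exact lintegral_congr fun x => (hP x A).symm

lemma exists_sub_notMem_l1Ball {d : ℕ} (hd : 0 < d) (s : Finset (Fin d → ℤ)) (n : ℤ) :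
    ∃ m : Fin d → ℤ, ∀ z ∈ s, n < ∑ i, |(z - m) i| := by
  let i₀ : Fin d := ⟨0, hd⟩
  let c := n + 1 + ∑ w ∈ s, |w i₀|
  let m : Fin d → ℤ := Pi.single i₀ c
  refine ⟨m, fun z hz => ?_⟩
  have hz_le : |z i₀| ≤ ∑ w ∈ s, |w i₀| :=
    Finset.single_le_sum (f := fun w => |w i₀|) (fun w _ => abs_nonneg _) hz
  calc n < c - |z i₀| := by omega
    _ ≤ |z i₀ - c| := by
      rw [abs_sub_comm]
      exact (sub_le_sub_left (le_abs_self _) c).trans (le_abs_self _)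
    _ = |(z - m) i₀| := by simp [m]
    _ ≤ ∑ i, |(z - m) i| :=
      Finset.single_le_sum (f := fun i => |(z - m) i|)
        (fun i _ => abs_nonneg _) (Finset.mem_univ i₀)

lemma abs_toReal_measure_sub_le_one {α : Type*} [MeasurableSpace α] {μ ν : Measure α}
    [IsProbabilityMeasure μ] [IsProbabilityMeasure ν] (A : Set α) :
    |(μ A).toReal - (ν A).toReal| ≤ 1 :=
  abs_sub_le_of_nonneg_of_le ENNReal.toReal_nonneg measureReal_le_one
    ENNReal.toReal_nonneg measureReal_le_one

section shiftInvariant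

variable {S : Type*} [MeasurableSpace S] {d : ℕ} {μ ν : Measure ((Fin d → ℤ) → S)}
  [IsProbabilityMeasure μ] [IsProbabilityMeasure ν]

lemma abs_sub_le_iSup_far_of_shift_invariant (hd : 0 < d)
    (hμ : ∀ m A, MeasurableSet A → μ (configShift S m '' A) = μ A)
    (hν : ∀ m A, MeasurableSet A → ν (configShift S m '' A) = ν A)
    (s : Finset (Fin d → ℤ)) {B : Set (∀ _ : s, S)} (hB : MeasurableSet B) (n : ℕ) :
    |(μ (cylinder s B)).toReal - (ν (cylinder s B)).toReal| ≤
      ⨆ A : {A : Set ((Fin d → ℤ) → S) //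
          MeasurableSet[coordSigma {z : Fin d → ℤ | ¬ (∑ i, |z i| ≤ (n : ℤ))}] A},
        |(μ A).toReal - (ν A).toReal| := by
  obtain ⟨m, hm⟩ := exists_sub_notMem_l1Ball hd s n
  have hfar := measurableSet_coordSigma_image_configShift_cylinder hB
    (Ψ := {z : Fin d → ℤ | ¬ (∑ i, |z i| ≤ (n : ℤ))}) fun z hz => not_le.2 (hm z hz)
  have hC := MeasurableSet.cylinder (α := fun _ : Fin d → ℤ => S) s hB
  calc |(μ (cylinder s B)).toReal - (ν (cylinder s B)).toReal|
      = |(μ (configShift S m '' cylinder s B)).toReal -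
          (ν (configShift S m '' cylinder s B)).toReal| := by rw [hμ m _ hC, hν m _ hC]
    _ ≤ _ := le_ciSup (f := fun A : {A : Set ((Fin d → ℤ) → S) //
          MeasurableSet[coordSigma {z : Fin d → ℤ | ¬ (∑ i, |z i| ≤ (n : ℤ))}] A} =>
            |(μ A).toReal - (ν A).toReal|)
        ⟨1, Set.forall_mem_range.2 fun A => abs_toReal_measure_sub_le_one A.1⟩ ⟨_, hfar⟩

lemma eq_of_shift_invariant_of_tendsto_iSup_far (hd : 0 < d)
    (hμ : ∀ m A, MeasurableSet A → μ (configShift S m '' A) = μ A)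
    (hν : ∀ m A, MeasurableSet A → ν (configShift S m '' A) = ν A)
    (htendsto : Tendsto (fun n : ℕ =>
        ⨆ A : {A : Set ((Fin d → ℤ) → S) //
            MeasurableSet[coordSigma {z : Fin d → ℤ | ¬ (∑ i, |z i| ≤ (n : ℤ))}] A},
          |(μ A).toReal - (ν A).toReal|) atTop (nhds 0)) :
    μ = ν := by
  refine ext_of_generate_finite _ generateFrom_measurableCylinders.symm
    isPiSystem_measurableCylinders ?_ (by simp)
  rintro _ hC
  obtain ⟨s, B, hB, rfl⟩ := (mem_measurableCylinders _).1 hC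
  have hle := ge_of_tendsto' htendsto (abs_sub_le_iSup_far_of_shift_invariant hd hμ hν s hB)
  exact (ENNReal.toReal_eq_toReal_iff' (measure_ne_top _ _) (measure_ne_top _ _)).1
    (sub_eq_zero.1 (abs_nonpos_iff.1 hle))

end shiftInvariant

theorem stmt_13_general {S : Type*}
    [MeasurableSpace S]
    {d : ℕ} (hd : 0 < d)
    (T : (Fin d → ℤ) → ((Fin d → ℤ) → S) → ((Fin d → ℤ) → S))
    (hT : ∀ m x z, T m x z = x (z + m))
    (P : Kernel ((Fin d → ℤ) → S) ((Fin d → ℤ) → S))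
    (hshiftP : ∀ (x : (Fin d → ℤ) → S) (A : Set ((Fin d → ℤ) → S)) (m : Fin d → ℤ),
      P x A = P (T m x) (T m '' A))
    (ν : Measure ((Fin d → ℤ) → S)) [IsProbabilityMeasure ν]
    (hνshift : ∀ (m : Fin d → ℤ) (A : Set ((Fin d → ℤ) → S)), ν (T m '' A) = ν A)
    (νP : Measure ((Fin d → ℤ) → S)) [IsProbabilityMeasure νP]
    (hνP : ∀ A : Set ((Fin d → ℤ) → S), MeasurableSet A → νP A = ∫⁻ x, P x A ∂ν)
    (hlemma : Tendsto (fun n : ℕ =>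
        ⨆ A : {A : Set ((Fin d → ℤ) → S) //
            MeasurableSet[coordSigma {z : Fin d → ℤ | ¬ (∑ i, |z i| ≤ (n : ℤ))}] A},
          |(νP A).toReal - (ν A).toReal|) atTop (nhds 0)) :
    νP = ν := by
  obtain rfl : T = fun m => ⇑(configShift S m) := by
    ext m x z; exact hT m x z
  have hν_preserving (m : Fin d → ℤ) : MeasurePreserving (configShift S m) ν ν :=
    (configShift S m).measurePreserving_of_measure_image_eq fun A _ => hνshift m A
  have hνP_shift (m : Fin d → ℤ) (A : Set ((Fin d → ℤ) → S)) (hA : MeasurableSet A) :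
      νP (configShift S m '' A) = νP A := by
    rw [hνP _ ((configShift S m).measurableSet_image.2 hA), hνP A hA]
    exact lintegral_kernel_image_eq_of_measurePreserving (hν_preserving m)
      (fun x A => hshiftP x A m) A
  exact eq_of_shift_invariant_of_tendsto_iSup_far hd hνP_shift
    (fun m A _ => hνshift m A) hlemma

/-- Theorem 2 of the paper, reduced modulo Lemma 2.1: on
`Γ = S^{ℤ^d}`, for a PCA kernel satisfying (A1)-(A4) and space-shift
invariance (A5), if `ν` is a space-shift invariant probability measure for
which the conclusion of Lemma 2.1 holds (with `Φ_n` the `ℓ¹`-balls), then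
`ν^P = ν`, i.e. `ν` is time-invariant. -/
theorem stmt_13 {S : Type*} [Fintype S] [Nonempty S]
    [MeasurableSpace S] [MeasurableSingletonClass S]
    {d : ℕ} (hd : 0 < d)
    (T : (Fin d → ℤ) → ((Fin d → ℤ) → S) → ((Fin d → ℤ) → S))
    (hT : ∀ m x z, T m x z = x (z + m))
    (P : Kernel ((Fin d → ℤ) → S) ((Fin d → ℤ) → S)) [IsMarkovKernel P]
    (N : (Fin d → ℤ) → Finset (Fin d → ℤ)) (hN : ∀ z, z ∈ N z)
    (hDfin : ∀ z, {z' | z ∈ N z'}.Finite)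
    (Pz : (Fin d → ℤ) → ((Fin d → ℤ) → S) → S → ENNReal)
    (hloc : ∀ z x y s, (∀ w ∈ N z, x w = y w) → Pz z x s = Pz z y s)
    (hpos : ∀ z x s, 0 < Pz z x s)
    (hsync : ∀ (x : (Fin d → ℤ) → S) (Φ : Finset (Fin d → ℤ)) (v : (Fin d → ℤ) → S),
      P x {y | ∀ z ∈ Φ, y z = v z} = ∏ z ∈ Φ, Pz z x (v z))
    (hshiftP : ∀ (x : (Fin d → ℤ) → S) (A : Set ((Fin d → ℤ) → S)) (m : Fin d → ℤ),
      P x A = P (T m x) (T m '' A))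
    (ν : Measure ((Fin d → ℤ) → S)) [IsProbabilityMeasure ν]
    (hνshift : ∀ (m : Fin d → ℤ) (A : Set ((Fin d → ℤ) → S)), ν (T m '' A) = ν A)
    (νP : Measure ((Fin d → ℤ) → S)) [IsProbabilityMeasure νP]
    (hνP : ∀ A : Set ((Fin d → ℤ) → S), MeasurableSet A → νP A = ∫⁻ x, P x A ∂ν)
    (hlemma : Tendsto (fun n : ℕ =>
        ⨆ A : {A : Set ((Fin d → ℤ) → S) //
            MeasurableSet[coordSigma {z : Fin d → ℤ | ¬ (∑ i, |z i| ≤ (n : ℤ))}] A},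
          |(νP A).toReal - (ν A).toReal|) atTop (nhds 0)) :
    νP = ν :=
  stmt_13_general hd T hT P hshiftP ν hνshift νP hνP hlemma
end

section
/- Let $\Gamma = S^W$ with $S$ finite and $W$ countable, and let $P$ satisfy the PCA assumptions (A1), (A2), (A4). Then for every finite $\Phi \subset W$ and every set $A$ measurable with respect to the coordinates in $W \setminus \Phi_0$, where $\Phi_0 = \bigcup_{y\in\Phi} D(y)$, the function $x \mapsto P(x, A)$ is measurable with respect to the coordinates in $W\setminus\Phi$. Consequently, for every $A$ in the spatial tail $\sigma$-algebra $\widehat{\mathcal{B}} = \bigcap_{\Phi\text{ finite}}\mathcal{B}_{W\setminus\Phi}$, the map $x \mapsto P(x,A)$ is $\widehat{\mathcal{B}}$-measurable. -/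
open MeasureTheory ProbabilityTheory
open scoped Classical

/-! Under synchronicity the transition probability of a cylinder on a finite `Ψ` is a product of
local factors, the one at `z` reading only the coordinates in `N z`; when `Ψ` avoids
`Φ₀ = ⋃_{y ∈ Φ} D(y)`, none of these neighbourhoods meets `Φ`. Cylinders on finite subsets of
`W ∖ Φ₀` form a π-system generating the coordinate σ-algebra of `W ∖ Φ₀`, and the sets `A` for
which `x ↦ P(x, A)` is measurable form a λ-system, so Dynkin's theorem extends the claim to that
σ-algebra. A tail set lies in the coordinate σ-algebra of `W ∖ Φ₀` for every finite `Φ`, since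
`Φ₀` is finite by (A4). -/

section CoordSigma

variable {S W : Type*} [MeasurableSpace S]

lemma coordSigma_le_pi (Ψ : Set W) : coordSigma (S := S) Ψ ≤ MeasurableSpace.pi :=
  iSup₂_le fun z _ => (measurable_pi_apply z).comap_le

lemma measurable_eval_coordSigma {Ψ : Set W} {z : W} (hz : z ∈ Ψ) :
    Measurable[coordSigma Ψ] (fun x : W → S => x z) :=
  measurable_iff_comap_le.mpr <| le_iSup₂ (f := fun z (_ : z ∈ Ψ) =>
    MeasurableSpace.comap (fun x : W → S => x z) inferInstance) z hz

lemma measurable_coordSigma_of_forall_eq [Countable S] [MeasurableSingletonClass S]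
    {β : Type*} [MeasurableSpace β] {C : Set W} (Ψ : Finset W) (hΨ : ↑Ψ ⊆ C)
    {f : (W → S) → β} (hf : ∀ x y : W → S, (∀ w ∈ Ψ, x w = y w) → f x = f y) :
    Measurable[coordSigma C] f := by
  intro B _
  let r : (W → S) → (Ψ → S) := fun x w => x w
  have hr : Measurable[coordSigma C] r :=
    (@measurable_pi_iff _ _ _ (coordSigma C) _ r).mpr fun w => measurable_eval_coordSigma (hΨ w.2)
  have hfactor : f ⁻¹' B = r ⁻¹' (r '' (f ⁻¹' B)) := by
    refine (Set.subset_preimage_image r _).antisymm ?_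
    rintro x ⟨y, hy, hyx⟩
    rwa [Set.mem_preimage, ← hf y x fun w hw => congrFun hyx ⟨w, hw⟩]
  rw [hfactor]
  exact hr (Set.to_countable _).measurableSet

end CoordSigma

section Cylinders

variable {S W : Type*}

def finCylinder (Ψ : Finset W) (v : W → S) : Set (W → S) := {y | ∀ z ∈ Ψ, y z = v z}

def finCylinders (T : Set W) : Set (Set (W → S)) :=
  {A | ∃ (Ψ : Finset W) (v : W → S), ↑Ψ ⊆ T ∧ A = finCylinder Ψ v}

lemma finCylinder_eq_of_mem {Ψ : Finset W} {v y : W → S} (hy : y ∈ finCylinder Ψ v) :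
    finCylinder Ψ v = finCylinder Ψ y := by
  ext x
  exact forall₂_congr fun z hz => by rw [hy z hz]

lemma finCylinder_inter (Ψ₁ Ψ₂ : Finset W) (v : W → S) :
    finCylinder Ψ₁ v ∩ finCylinder Ψ₂ v = finCylinder (Ψ₁ ∪ Ψ₂) v := by
  ext x
  simp only [finCylinder, Set.mem_inter_iff, Set.mem_ofPred_eq, Finset.mem_union,
    or_imp, forall_and]

lemma isPiSystem_finCylinders (T : Set W) : IsPiSystem (finCylinders (S := S) T) := by
  rintro _ ⟨Ψ₁, v₁, hΨ₁, rfl⟩ _ ⟨Ψ₂, v₂, hΨ₂, rfl⟩ ⟨y, hy₁, hy₂⟩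
  refine ⟨Ψ₁ ∪ Ψ₂, y, by simp [hΨ₁, hΨ₂], ?_⟩
  rw [finCylinder_eq_of_mem hy₁, finCylinder_eq_of_mem hy₂, finCylinder_inter]

lemma coordSigma_eq_generateFrom_finCylinders [MeasurableSpace S] [Countable S]
    [MeasurableSingletonClass S] (T : Set W) :
    coordSigma T = MeasurableSpace.generateFrom (finCylinders (S := S) T) := by
  refine le_antisymm (iSup₂_le fun z hz => ?_) (MeasurableSpace.generateFrom_le ?_)
  · rintro _ ⟨B, -, rfl⟩
    have hB : (fun x : W → S => x z) ⁻¹' B = ⋃ s ∈ B, finCylinder {z} (fun _ => s) := by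
      ext x
      simp [finCylinder]
    rw [hB]
    exact .biUnion (Set.to_countable B) fun s _ =>
      .basic _ ⟨{z}, fun _ => s, by simpa using hz, rfl⟩
  · rintro _ ⟨Ψ, v, hΨ, rfl⟩
    have hcyl : finCylinder Ψ v = ⋂ z ∈ Ψ, (fun y : W → S => y z) ⁻¹' {v z} := by
      ext y
      simp [finCylinder]
    rw [hcyl]
    exact .biInter (Set.to_countable _) fun z hz =>
      measurable_eval_coordSigma (hΨ hz) (measurableSet_singleton (v z))

end Cylinders

lemma ProbabilityTheory.Kernel.measurable_apply_of_isPiSystem {α β : Type*}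
    {mα : MeasurableSpace α} {m : MeasurableSpace β} [MeasurableSpace α] [MeasurableSpace β]
    (κ : Kernel α β) [IsMarkovKernel κ] (hm : m ≤ ‹MeasurableSpace β›) {C : Set (Set β)}
    (hgen : m = MeasurableSpace.generateFrom C) (hC : IsPiSystem C)
    (hbasic : ∀ A ∈ C, Measurable[mα] fun x => κ x A) {A : Set β}
    (hA : MeasurableSet[m] A) : Measurable[mα] fun x => κ x A := by
  induction A, hA using MeasurableSpace.induction_on_inter hgen hC with
  | empty => simp
  | basic A hA => exact hbasic A hA
  | compl A hAm hAκ =>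
    have hcompl : (fun x => κ x Aᶜ) = fun x => 1 - κ x A := funext fun x => by
      rw [measure_compl (hm A hAm) (measure_ne_top _ _), measure_univ]
    rw [hcompl]
    exact hAκ.const_sub 1
  | iUnion f hdisj hfm hfκ =>
    have hunion : (fun x => κ x (⋃ i, f i)) = fun x => ∑' i, κ x (f i) :=
      funext fun x => measure_iUnion hdisj fun i => hm _ (hfm i)
    rw [hunion]
    let _ : MeasurableSpace α := mα
    exact .tsum hfκ

lemma compl_biUnion_dependents_eq {W : Type*} (N : W → Finset W)
    (hDfin : ∀ z : W, {z' : W | z ∈ N z'}.Finite) (Φ : Finset W) :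
    ((↑(Φ.biUnion fun y => (hDfin y).toFinset) : Set W)ᶜ) = {z | ∀ y ∈ Φ, y ∉ N z} := by
  ext z
  simp

theorem stmt_18_general {S W : Type*} [Fintype S]
    [MeasurableSpace S] [MeasurableSingletonClass S]
    (P : Kernel (W → S) (W → S)) [IsMarkovKernel P]
    (N : W → Finset W)
    (hDfin : ∀ z : W, {z' : W | z ∈ N z'}.Finite)
    (Pz : W → (W → S) → S → ENNReal)
    (hloc : ∀ (z : W) (x y : W → S) (s : S), (∀ w ∈ N z, x w = y w) → Pz z x s = Pz z y s)
    (hsync : ∀ (x : W → S) (Φ : Finset W) (v : W → S),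
      P x {y | ∀ z ∈ Φ, y z = v z} = ∏ z ∈ Φ, Pz z x (v z)) :
    (∀ (Φ : Finset W) (A : Set (W → S)),
      MeasurableSet[coordSigma {z : W | ∀ y ∈ Φ, y ∉ N z}] A →
      Measurable[coordSigma ((↑Φ : Set W)ᶜ)] (fun x => P x A))
    ∧ (∀ A : Set (W → S),
      MeasurableSet[⨅ Φ' : Finset W, coordSigma ((↑Φ' : Set W)ᶜ)] A →
      Measurable[⨅ Φ' : Finset W, coordSigma ((↑Φ' : Set W)ᶜ)] (fun x => P x A)) := by
  have hlocal : ∀ (Φ : Finset W) (A : Set (W → S)),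
      MeasurableSet[coordSigma {z : W | ∀ y ∈ Φ, y ∉ N z}] A →
      Measurable[coordSigma ((↑Φ : Set W)ᶜ)] (fun x => P x A) := by
    intro Φ A hA
    refine P.measurable_apply_of_isPiSystem (coordSigma_le_pi _)
      (coordSigma_eq_generateFrom_finCylinders _) (isPiSystem_finCylinders _) ?_ hA
    rintro _ ⟨Ψ, v, hΨ, rfl⟩
    simp_rw [finCylinder, hsync]
    refine Finset.measurable_prod _ fun z hz => ?_
    exact measurable_coordSigma_of_forall_eq (N z) (fun w hw hwΦ => hΨ hz w hwΦ hw)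
      fun x y => hloc z x y (v z)
  refine ⟨hlocal, fun A hA => measurable_iff_comap_le.mpr (le_iInf fun Φ => ?_)⟩
  refine measurable_iff_comap_le.mp (hlocal Φ A ?_)
  rw [← compl_biUnion_dependents_eq N hDfin]
  exact MeasurableSpace.measurableSet_iInf.mp hA _

/-- Föllmer's measurability lemma, first part of Theorem 1:
under (A1), (A2), (A4), for every finite `Φ ⊆ W` and every set `A` measurable
w.r.t. the coordinates in `W ∖ Φ₀` (where `Φ₀ = ⋃_{y∈Φ} D(y)`), the map
`x ↦ P(x,A)` is measurable w.r.t. the coordinates in `W ∖ Φ`; consequently for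
every `A` in the spatial tail σ-algebra, `x ↦ P(x,A)` is tail-measurable. -/
theorem stmt_18 {S W : Type*} [Fintype S] [Nonempty S] [Countable W]
    [MeasurableSpace S] [MeasurableSingletonClass S]
    (P : Kernel (W → S) (W → S)) [IsMarkovKernel P]
    (N : W → Finset W) (hN : ∀ z, z ∈ N z)
    (hDfin : ∀ z : W, {z' : W | z ∈ N z'}.Finite)
    (Pz : W → (W → S) → S → ENNReal)
    (hloc : ∀ (z : W) (x y : W → S) (s : S), (∀ w ∈ N z, x w = y w) → Pz z x s = Pz z y s)
    (hsync : ∀ (x : W → S) (Φ : Finset W) (v : W → S),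
      P x {y | ∀ z ∈ Φ, y z = v z} = ∏ z ∈ Φ, Pz z x (v z)) :
    (∀ (Φ : Finset W) (A : Set (W → S)),
      MeasurableSet[coordSigma {z : W | ∀ y ∈ Φ, y ∉ N z}] A →
      Measurable[coordSigma ((↑Φ : Set W)ᶜ)] (fun x => P x A))
    ∧ (∀ A : Set (W → S),
      MeasurableSet[⨅ Φ' : Finset W, coordSigma ((↑Φ' : Set W)ᶜ)] A →
      Measurable[⨅ Φ' : Finset W, coordSigma ((↑Φ' : Set W)ᶜ)] (fun x => P x A)) :=
  stmt_18_general P N hDfin Pz hloc hsync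
end
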